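/- arXiv:1611.02901 — 8 statements merged into one kernel-verified Lean document; each statement's English description precedes it below -/
import Mathlib

section
/- Let e ≥ 1 and let b : Fin e → B, w : Fin e → W be the incidence maps of a finite connected bipartite graph. Let (σ₁, τ₁) and (σ₂, τ₂) be two pairs in the set F of admissible permutation pairs. Then there exists a permutation η of Fin e with η σ₁ η⁻¹ = σ₂ and η τ₁ η⁻¹ = τ₂ if and only if there exists a bipartite graph automorphism (β, ω, π) with π σ₁ π⁻¹ = σ₂ and π τ₁ π⁻¹ = τ₂. (In other words, two pairs in F define isomorphic dessins d'enfants if and only if they lie in the same orbit of the bipartite graph automorphism group.) -/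
/-!
Conjugating `σ₁` into `σ₂` by `η` carries `σ₁`-cycles onto `σ₂`-cycles. Both cycle partitions are
the fibres of `b`, so `η` maps `b`-fibres onto `b`-fibres and descends to a bijection of `B`;
likewise for `τ` and `W`. Hence `η` itself is the edge part of a graph automorphism.
-/

/-- `(σ, τ)` is an admissible pair for the bipartite graph with incidence maps `b` and `w`:
the orbits of `σ` are exactly the fibers of `b` and the orbits of `τ` are exactly the
fibers of `w`. -/
def IsAdmissiblePair {e : ℕ} {B W : Type*} (b : Fin e → B) (w : Fin e → W)
    (σ τ : Equiv.Perm (Fin e)) : Prop :=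
  (∀ k k' : Fin e, (∃ n : ℤ, (σ ^ n) k = k') ↔ b k = b k') ∧
  (∀ k k' : Fin e, (∃ n : ℤ, (τ ^ n) k = k') ↔ w k = w k')

theorem Equiv.Perm.apply_eq_apply_iff_of_conj_eq {α β : Type*} {f : α → β}
    {σ₁ σ₂ η : Equiv.Perm α} (hσ₁ : ∀ x y, σ₁.SameCycle x y ↔ f x = f y)
    (hσ₂ : ∀ x y, σ₂.SameCycle x y ↔ f x = f y) (hη : η * σ₁ * η⁻¹ = σ₂) (x y : α) :
    f (η x) = f (η y) ↔ f x = f y := by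
  rw [← hσ₂, ← hη, Equiv.Perm.sameCycle_conj, Equiv.Perm.coe_inv, η.symm_apply_apply,
    η.symm_apply_apply, hσ₁]

theorem Function.Surjective.exists_equiv_comp_eq_comp {α β : Type*} {f : α → β}
    (hf : Function.Surjective f) {π : Equiv.Perm α} (hπ : ∀ x y, f (π x) = f (π y) ↔ f x = f y) :
    ∃ ρ : β ≃ β, f ∘ π = ρ ∘ f := by
  set ρ : β → β := fun y => f (π (Function.surjInv hf y))
  have hρ : ∀ x, ρ (f x) = f (π x) := fun x => (hπ _ _).mpr (Function.surjInv_eq hf (f x))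
  have hinj : Function.Injective ρ := by
    intro y y' h
    obtain ⟨x, rfl⟩ := hf y
    obtain ⟨x', rfl⟩ := hf y'
    rwa [hρ, hρ, hπ] at h
  have hsurj : Function.Surjective ρ := by
    intro y
    obtain ⟨x, rfl⟩ := hf y
    exact ⟨f (π⁻¹ x), by rw [hρ, Equiv.Perm.coe_inv, π.apply_symm_apply]⟩
  exact ⟨Equiv.ofBijective ρ ⟨hinj, hsurj⟩, funext fun x => (hρ x).symm⟩

theorem stmt0_general {e : ℕ} {B W : Type*}
    (b : Fin e → B) (w : Fin e → W) (hb : Function.Surjective b) (hw : Function.Surjective w)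
    (σ₁ τ₁ σ₂ τ₂ : Equiv.Perm (Fin e))
    (h1 : IsAdmissiblePair b w σ₁ τ₁) (h2 : IsAdmissiblePair b w σ₂ τ₂) :
    (∃ η : Equiv.Perm (Fin e), η * σ₁ * η⁻¹ = σ₂ ∧ η * τ₁ * η⁻¹ = τ₂) ↔
      (∃ (β : B ≃ B) (ω : W ≃ W) (π : Equiv.Perm (Fin e)),
        b ∘ π = β ∘ b ∧ w ∘ π = ω ∘ w ∧ π * σ₁ * π⁻¹ = σ₂ ∧ π * τ₁ * π⁻¹ = τ₂) := by
  constructor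
  · rintro ⟨η, hσ, hτ⟩
    -- `∃ n : ℤ, (σ ^ n) k = k'` is by definition `σ.SameCycle k k'`.
    obtain ⟨β, hβ⟩ := hb.exists_equiv_comp_eq_comp
      (Equiv.Perm.apply_eq_apply_iff_of_conj_eq h1.1 h2.1 hσ)
    obtain ⟨ω, hω⟩ := hw.exists_equiv_comp_eq_comp
      (Equiv.Perm.apply_eq_apply_iff_of_conj_eq h1.2 h2.2 hτ)
    exact ⟨β, ω, η, hβ, hω, hσ, hτ⟩
  · rintro ⟨-, -, π, -, -, hσ, hτ⟩
    exact ⟨π, hσ, hτ⟩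

theorem stmt0 {e : ℕ} (he : 1 ≤ e) {B W : Type*} [Fintype B] [Fintype W]
    (b : Fin e → B) (w : Fin e → W) (hb : Function.Surjective b) (hw : Function.Surjective w)
    (hconn : ∀ k k' : Fin e,
      Relation.EqvGen (fun k k' => b k = b k' ∨ w k = w k') k k')
    (σ₁ τ₁ σ₂ τ₂ : Equiv.Perm (Fin e))
    (h1 : IsAdmissiblePair b w σ₁ τ₁) (h2 : IsAdmissiblePair b w σ₂ τ₂) :
    (∃ η : Equiv.Perm (Fin e), η * σ₁ * η⁻¹ = σ₂ ∧ η * τ₁ * η⁻¹ = τ₂) ↔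
      (∃ (β : B ≃ B) (ω : W ≃ W) (π : Equiv.Perm (Fin e)),
        b ∘ π = β ∘ b ∧ w ∘ π = ω ∘ w ∧ π * σ₁ * π⁻¹ = σ₂ ∧ π * τ₁ * π⁻¹ = τ₂) :=
  stmt0_general b w hb hw σ₁ τ₁ σ₂ τ₂ h1 h2
end

section
/- Let e ≥ 1 and let b : Fin e → B, w : Fin e → W be the incidence maps of a finite connected bipartite graph, and let (σ, τ) be a pair in the set F of admissible permutation pairs. If a permutation η of Fin e commutes with both σ and τ, then there exist bijections β : B ≃ B and ω : W ≃ W with b ∘ η = β ∘ b and w ∘ η = ω ∘ w. Consequently, the centralizer of the subgroup generated by σ and τ in the permutation group of Fin e coincides with the stabilizer of the pair (σ, τ) under the conjugation action of the bipartite graph automorphism group (this common group is the orientation-preserving automorphism group of the dessin d'enfant determined by (σ, τ)). -/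
theorem Function.Surjective.exists_perm_comp_eq {α X : Type*} {f : α → X}
    (hf : Function.Surjective f) (η : Equiv.Perm α)
    (hη : ∀ a a', f a = f a' ↔ f (η a) = f (η a')) :
    ∃ β : Equiv.Perm X, f ∘ η = β ∘ f := by
  let q := Setoid.quotientKerEquivOfSurjective f hf
  refine ⟨q.symm.trans ((Quotient.congr η hη).trans q), funext fun a => ?_⟩
  have hq : q.symm (f a) = Quotient.mk _ a := q.symm_apply_eq.mpr rfl
  simp only [Function.comp_apply, Equiv.trans_apply, hq, Quotient.congr_mk]
  rfl

theorem apply_eq_apply_iff_of_commute {α X : Type*} {f : α → X} {σ η : Equiv.Perm α}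
    (hσ : ∀ a a', (∃ n : ℤ, (σ ^ n) a = a') ↔ f a = f a') (hη : Commute η σ) (a a' : α) :
    f a = f a' ↔ f (η a) = f (η a') := by
  rw [← hσ, ← hσ]
  refine exists_congr fun n => ?_
  rw [← η.injective.eq_iff]
  exact iff_of_eq (congrArg (· = η a') (DFunLike.congr_fun (hη.zpow_right n).eq a))

theorem Subgroup.mem_centralizer_closure_pair_iff {G : Type*} [Group G] {σ τ π : G} :
    π ∈ Subgroup.centralizer (Subgroup.closure {σ, τ} : Set G) ↔ Commute π σ ∧ Commute π τ := by
  simp only [Subgroup.centralizer_closure, Subgroup.mem_centralizer_iff, Set.forall_mem_insert,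
    Set.mem_singleton_iff, forall_eq]
  exact and_congr eq_comm eq_comm

theorem stmt1_general {e : ℕ} {B W : Type*}
    (b : Fin e → B) (w : Fin e → W) (hb : Function.Surjective b) (hw : Function.Surjective w)
    (σ τ : Equiv.Perm (Fin e)) (hF : IsAdmissiblePair b w σ τ) :
    (∀ η : Equiv.Perm (Fin e), η * σ = σ * η → η * τ = τ * η →
      ∃ (β : B ≃ B) (ω : W ≃ W), b ∘ η = β ∘ b ∧ w ∘ η = ω ∘ w) ∧
    ((Subgroup.centralizer
        ((Subgroup.closure {σ, τ} : Subgroup (Equiv.Perm (Fin e))) : Set (Equiv.Perm (Fin e))) :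
        Set (Equiv.Perm (Fin e))) =
      {π : Equiv.Perm (Fin e) |
        (∃ (β : B ≃ B) (ω : W ≃ W), b ∘ π = β ∘ b ∧ w ∘ π = ω ∘ w) ∧
        π * σ * π⁻¹ = σ ∧ π * τ * π⁻¹ = τ}) := by
  have descends (η : Equiv.Perm (Fin e)) (hσ : Commute η σ) (hτ : Commute η τ) :
      ∃ (β : B ≃ B) (ω : W ≃ W), b ∘ η = β ∘ b ∧ w ∘ η = ω ∘ w := by
    obtain ⟨β, hβ⟩ := hb.exists_perm_comp_eq η (apply_eq_apply_iff_of_commute hF.1 hσ)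
    obtain ⟨ω, hω⟩ := hw.exists_perm_comp_eq η (apply_eq_apply_iff_of_commute hF.2 hτ)
    exact ⟨β, ω, hβ, hω⟩
  refine ⟨descends, Set.ext fun π => ?_⟩
  rw [SetLike.mem_coe, Subgroup.mem_centralizer_closure_pair_iff, Set.mem_ofPred_eq,
    mul_inv_eq_iff_eq_mul, mul_inv_eq_iff_eq_mul]
  exact ⟨fun h => ⟨descends π h.1 h.2, h⟩, And.right⟩

theorem stmt1 {e : ℕ} (he : 1 ≤ e) {B W : Type*} [Fintype B] [Fintype W]
    (b : Fin e → B) (w : Fin e → W) (hb : Function.Surjective b) (hw : Function.Surjective w)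
    (hconn : ∀ k k' : Fin e,
      Relation.EqvGen (fun k k' => b k = b k' ∨ w k = w k') k k')
    (σ τ : Equiv.Perm (Fin e)) (hF : IsAdmissiblePair b w σ τ) :
    (∀ η : Equiv.Perm (Fin e), η * σ = σ * η → η * τ = τ * η →
      ∃ (β : B ≃ B) (ω : W ≃ W), b ∘ η = β ∘ b ∧ w ∘ η = ω ∘ w) ∧
    ((Subgroup.centralizer
        ((Subgroup.closure {σ, τ} : Subgroup (Equiv.Perm (Fin e))) : Set (Equiv.Perm (Fin e))) :
        Set (Equiv.Perm (Fin e))) =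
      {π : Equiv.Perm (Fin e) |
        (∃ (β : B ≃ B) (ω : W ≃ W), b ∘ π = β ∘ b ∧ w ∘ π = ω ∘ w) ∧
        π * σ * π⁻¹ = σ ∧ π * τ * π⁻¹ = τ}) :=
  stmt1_general b w hb hw σ τ hF
end

section
/- Let e ≥ 1 and let b : Fin e → B, w : Fin e → W be the incidence maps of a finite connected bipartite graph. Then for every pair (σ, τ) in the set F of admissible permutation pairs, the subgroup of the permutation group of Fin e generated by σ and τ acts transitively on Fin e (so (σ, τ) is the monodromy of a dessin d'enfant whose underlying bipartite graph is the given one). -/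
open Equiv

namespace Subgroup

variable {α : Type*}

theorem equivalence_exists_mem_apply_eq (H : Subgroup (Perm α)) :
    Equivalence fun x y : α => ∃ g ∈ H, g x = y where
  refl _ := ⟨1, H.one_mem, rfl⟩
  symm := fun ⟨g, hg, hgx⟩ => ⟨g⁻¹, H.inv_mem hg, by simp [← hgx]⟩
  trans := fun ⟨g, hg, hgx⟩ ⟨g', hg', hgy⟩ => ⟨g' * g, H.mul_mem hg' hg, by simp [hgx, hgy]⟩

theorem exists_mem_apply_eq_of_eqvGen {H : Subgroup (Perm α)} {r : α → α → Prop}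
    (hr : ∀ x y, r x y → ∃ g ∈ H, g x = y) {x y : α} (h : Relation.EqvGen r x y) :
    ∃ g ∈ H, g x = y :=
  H.equivalence_exists_mem_apply_eq.eqvGen_iff.mp (h.mono hr)

theorem exists_mem_apply_eq_of_zpow_apply_eq {H : Subgroup (Perm α)} {σ : Perm α} (hσ : σ ∈ H)
    {x y : α} (h : ∃ n : ℤ, (σ ^ n) x = y) : ∃ g ∈ H, g x = y :=
  let ⟨n, hn⟩ := h
  ⟨σ ^ n, H.zpow_mem hσ n, hn⟩

end Subgroup

theorem IsAdmissiblePair.exists_mem_closure_apply_eq {e : ℕ} {B W : Type*} {b : Fin e → B}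
    {w : Fin e → W} {σ τ : Perm (Fin e)} (hF : IsAdmissiblePair b w σ τ) {k k' : Fin e}
    (hkk' : b k = b k' ∨ w k = w k') :
    ∃ g ∈ Subgroup.closure ({σ, τ} : Set (Perm (Fin e))), g k = k' := by
  rcases hkk' with hb | hw
  · exact Subgroup.exists_mem_apply_eq_of_zpow_apply_eq (Subgroup.subset_closure (by simp))
      ((hF.1 k k').mpr hb)
  · exact Subgroup.exists_mem_apply_eq_of_zpow_apply_eq (Subgroup.subset_closure (by simp))
      ((hF.2 k k').mpr hw)

theorem stmt4_general {e : ℕ} {B W : Type*}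
    (b : Fin e → B) (w : Fin e → W)
    (hconn : ∀ k k' : Fin e,
      Relation.EqvGen (fun k k' => b k = b k' ∨ w k = w k') k k')
    (σ τ : Equiv.Perm (Fin e)) (hF : IsAdmissiblePair b w σ τ) :
    ∀ k k' : Fin e, ∃ g ∈ Subgroup.closure ({σ, τ} : Set (Equiv.Perm (Fin e))), g k = k' :=
  fun k k' => Subgroup.exists_mem_apply_eq_of_eqvGen (fun _ _ => hF.exists_mem_closure_apply_eq)
    (hconn k k')

theorem stmt4 {e : ℕ} (he : 1 ≤ e) {B W : Type*} [Fintype B] [Fintype W]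
    (b : Fin e → B) (w : Fin e → W) (hb : Function.Surjective b) (hw : Function.Surjective w)
    (hconn : ∀ k k' : Fin e,
      Relation.EqvGen (fun k k' => b k = b k' ∨ w k = w k') k k')
    (σ τ : Equiv.Perm (Fin e)) (hF : IsAdmissiblePair b w σ τ) :
    ∀ k k' : Fin e, ∃ g ∈ Subgroup.closure ({σ, τ} : Set (Equiv.Perm (Fin e))), g k = k' :=
  stmt4_general b w hconn σ τ hF
end

section
/- Let e ≥ 1 and let b : Fin e → B, w : Fin e → W be surjective incidence maps of a finite bipartite graph, and let (σ, τ) be a pair in the set F of admissible permutation pairs. If the subgroup generated by σ and τ acts transitively on Fin e, then the bipartite graph is connected, i.e., the equivalence relation on Fin e generated by R k k' ↔ (b k = b k' ∨ w k = w k') relates any two edges. -/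
theorem Relation.EqvGen.smul_of_mem_closure {G α : Type*} [Group G] [MulAction G α]
    {s : Set G} {r : α → α → Prop} (hs : ∀ g ∈ s, ∀ x, r x (g • x))
    {g : G} (hg : g ∈ Subgroup.closure s) (x : α) : Relation.EqvGen r x (g • x) := by
  induction hg using Subgroup.closure_induction generalizing x with
  | mem g hg => exact .rel _ _ (hs g hg x)
  | one => simpa using .refl x
  | mul g h _ _ ihg ihh => simpa [mul_smul] using (ihh x).trans _ _ _ (ihg (h • x))
  | inv g _ ih => simpa using (ih (g⁻¹ • x)).symm

namespace IsAdmissiblePair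

variable {e : ℕ} {B W : Type*} {b : Fin e → B} {w : Fin e → W} {σ τ : Equiv.Perm (Fin e)}

theorem black_apply_left (hF : IsAdmissiblePair b w σ τ) (k : Fin e) : b k = b (σ k) :=
  (hF.1 k (σ k)).mp ⟨1, by simp⟩

theorem white_apply_right (hF : IsAdmissiblePair b w σ τ) (k : Fin e) : w k = w (τ k) :=
  (hF.2 k (τ k)).mp ⟨1, by simp⟩

end IsAdmissiblePair

theorem stmt5_general {e : ℕ} {B W : Type*}
    (b : Fin e → B) (w : Fin e → W)
    (σ τ : Equiv.Perm (Fin e)) (hF : IsAdmissiblePair b w σ τ)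
    (htrans : ∀ k k' : Fin e,
      ∃ g ∈ Subgroup.closure ({σ, τ} : Set (Equiv.Perm (Fin e))), g k = k') :
    ∀ k k' : Fin e, Relation.EqvGen (fun k k' => b k = b k' ∨ w k = w k') k k' := by
  have generators_related : ∀ g ∈ ({σ, τ} : Set (Equiv.Perm (Fin e))),
      ∀ k, b k = b (g • k) ∨ w k = w (g • k) := by
    rintro g (rfl | rfl) k
    · exact .inl (hF.black_apply_left k)
    · exact .inr (hF.white_apply_right k)
  intro k k'
  obtain ⟨g, hg, rfl⟩ := htrans k k'
  exact Relation.EqvGen.smul_of_mem_closure generators_related hg k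

theorem stmt5 {e : ℕ} (he : 1 ≤ e) {B W : Type*} [Fintype B] [Fintype W]
    (b : Fin e → B) (w : Fin e → W) (hb : Function.Surjective b) (hw : Function.Surjective w)
    (σ τ : Equiv.Perm (Fin e)) (hF : IsAdmissiblePair b w σ τ)
    (htrans : ∀ k k' : Fin e,
      ∃ g ∈ Subgroup.closure ({σ, τ} : Set (Equiv.Perm (Fin e))), g k = k') :
    ∀ k k' : Fin e, Relation.EqvGen (fun k k' => b k = b k' ∨ w k = w k') k k' :=
  stmt5_general b w σ τ hF htrans
end

section
/- Let V and E be finite types, let ε : E → Sym2 V be the incidence map of a finite connected multigraph G (connected means: the equivalence relation on V generated by 'u and v are joined by some edge' relates any two vertices), and suppose G is not a special graph, i.e., it is not the case that V has exactly two elements and no edge of G is a loop. If (φ₁ : V ≃ V, φ₂ : E ≃ E) is a graph automorphism of G (meaning ε (φ₂ x) = Sym2.map φ₁ (ε x) for every edge x) with φ₂ equal to the identity on E, then φ₁ is the identity on V. -/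
/-!
An automorphism fixing every edge maps each edge `s(u, w)` to itself, so on the endpoints it either
fixes both or swaps them. A vertex adjacent to a fixed vertex is therefore fixed, and by
connectivity one fixed vertex forces the identity. If no vertex is fixed, every edge is swapped, so
`{v, φ₁ v}` is closed under adjacency (as `φ₁` is injective) and is all of `V` by
connectivity; there are no loops, since a loop at `u` would fix `u`: the graph is special.
-/

theorem Relation.EqvGen.iff_of_forall_rel {α : Type*} {r : α → α → Prop} {P : α → Prop}
    (hP : ∀ a b, r a b → (P a ↔ P b)) {a b : α} (hab : EqvGen r a b) : P a ↔ P b :=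
  have hequiv : Equivalence fun a b => P a ↔ P b := ⟨fun _ => Iff.rfl, Iff.symm, Iff.trans⟩
  hequiv.eqvGen_iff.1 (hab.mono hP)

theorem Sym2.map_mk_eq_self_iff {α : Type*} {f : α → α} {u w : α} :
    Sym2.map f s(u, w) = s(u, w) ↔ f u = u ∧ f w = w ∨ f u = w ∧ f w = u := by
  rw [Sym2.map_mk, Sym2.eq_iff]

section EdgeFixing

variable {V E : Type*} {ε : E → Sym2 V} {f : V → V}

theorem apply_right_eq_self_of_map_mk_eq_self {u w : V} (h : Sym2.map f s(u, w) = s(u, w))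
    (hu : f u = u) : f w = w := by
  rcases Sym2.map_mk_eq_self_iff.1 h with ⟨-, hw⟩ | ⟨huw, -⟩
  · exact hw
  · obtain rfl : u = w := hu.symm.trans huw
    exact hu

theorem apply_left_eq_right_of_map_mk_eq_self {u w : V} (h : Sym2.map f s(u, w) = s(u, w))
    (hu : f u ≠ u) : f u = w := by
  rcases Sym2.map_mk_eq_self_iff.1 h with ⟨hu', -⟩ | ⟨huw, -⟩
  · exact absurd hu' hu
  · exact huw

variable (hf : ∀ x, Sym2.map f (ε x) = ε x)
include hf

theorem forall_apply_eq_self_of_connected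
    (hconn : ∀ u v : V, Relation.EqvGen (fun u v => ∃ x : E, ε x = s(u, v)) u v)
    {z : V} (hz : f z = z) (v : V) : f v = v := by
  refine (Relation.EqvGen.iff_of_forall_rel (P := fun v => f v = v)
    (fun a b ⟨x, hx⟩ => ⟨fun ha => ?_, fun hb => ?_⟩) (hconn z v)).1 hz
  · exact apply_right_eq_self_of_map_mk_eq_self (hx ▸ hf x) ha
  · exact apply_right_eq_self_of_map_mk_eq_self (Sym2.eq_swap ▸ hx ▸ hf x) hb

theorem not_isDiag_of_forall_apply_ne_self (hne : ∀ v, f v ≠ v) (x : E) : ¬ (ε x).IsDiag := by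
  induction hx : ε x using Sym2.ind with
  | _ u w =>
    rw [Sym2.mk_isDiag_iff]
    rintro rfl
    exact hne u (apply_left_eq_right_of_map_mk_eq_self (hx ▸ hf x) (hne u))

theorem card_eq_two_of_forall_apply_ne_self (hinj : f.Injective)
    (hconn : ∀ u v : V, Relation.EqvGen (fun u v => ∃ x : E, ε x = s(u, v)) u v)
    (hne : ∀ v, f v ≠ v) (v : V) : Nat.card V = 2 := by
  have hswap : ∀ {a b : V} (x : E), ε x = s(a, b) → f a = b := fun x hx =>
    apply_left_eq_right_of_map_mk_eq_self (hx ▸ hf x) (hne _)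
  have hpair (z : V) : z = v ∨ z = f v := by
    refine (Relation.EqvGen.iff_of_forall_rel (P := fun z => z = v ∨ z = f v)
      (fun a b ⟨x, hx⟩ => ?_) (hconn v z)).1 (Or.inl rfl)
    have hab := hswap x hx
    have hba := hswap x (hx.trans Sym2.eq_swap)
    constructor
    · rintro (rfl | rfl)
      · exact Or.inr hab.symm
      · exact Or.inl (hinj hba)
    · rintro (rfl | rfl)
      · exact Or.inr hba.symm
      · exact Or.inl (hinj hab)
  rw [Nat.card_eq_two_iff]
  refine ⟨v, f v, (hne v).symm, Set.eq_univ_of_forall fun z => ?_⟩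
  simpa using hpair z

end EdgeFixing

theorem stmt8_general {V E : Type*}
    (ε : E → Sym2 V)
    (hconn : ∀ u v : V,
      Relation.EqvGen (fun u v => ∃ x : E, ε x = s(u, v)) u v)
    (hnotspecial : ¬ (Nat.card V = 2 ∧ ∀ x : E, ¬ (ε x).IsDiag))
    (φ₁ : V ≃ V) (φ₂ : E ≃ E)
    (haut : ∀ x : E, ε (φ₂ x) = Sym2.map φ₁ (ε x))
    (hφ₂ : ∀ x : E, φ₂ x = x) :
    ∀ v : V, φ₁ v = v := by
  intro v
  have hfix : ∀ x, Sym2.map φ₁ (ε x) = ε x := fun x => by rw [← haut, hφ₂]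
  by_cases h : ∃ z, φ₁ z = z
  · obtain ⟨z, hz⟩ := h
    exact forall_apply_eq_self_of_connected hfix hconn hz v
  · push Not at h
    exact absurd ⟨card_eq_two_of_forall_apply_ne_self hfix φ₁.injective hconn h v,
      not_isDiag_of_forall_apply_ne_self hfix h⟩ hnotspecial

theorem stmt8 {V E : Type*} [Fintype V] [Fintype E]
    (ε : E → Sym2 V)
    (hconn : ∀ u v : V,
      Relation.EqvGen (fun u v => ∃ x : E, ε x = s(u, v)) u v)
    (hnotspecial : ¬ (Nat.card V = 2 ∧ ∀ x : E, ¬ (ε x).IsDiag))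
    (φ₁ : V ≃ V) (φ₂ : E ≃ E)
    (haut : ∀ x : E, ε (φ₂ x) = Sym2.map φ₁ (ε x))
    (hφ₂ : ∀ x : E, φ₂ x = x) :
    ∀ v : V, φ₁ v = v :=
  stmt8_general ε hconn hnotspecial φ₁ φ₂ haut hφ₂
end

section
/- Let e ≥ 1 and let σ, τ be permutations of Fin e such that the subgroup generated by σ and τ acts transitively on Fin e. Let α be the number of orbits of σ on Fin e, β the number of orbits of τ, and γ the number of orbits of the product τ σ. Then e − α − β − γ is even and α + β + γ ≤ e + 2; consequently g = 1 + (e − α − β − γ)/2 is a nonnegative integer (the genus of the dessin d'enfant with monodromy pair (σ, τ)). -/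
/-!
Multiplying a permutation by a transposition `swap a b` changes its number of cycles by exactly
one: the cycles of `a` and `b` are merged if they differ and split otherwise. Hence
`sign f = (-1) ^ (n + c f)`, where `c f` counts cycles, and multiplicativity of the sign gives the
parity statement.

For `c σ + c τ + c (τ * σ) ≤ n + 2 · #orbits ⟨σ, τ⟩`, peel off `τ` one transposition at a time,
`τ = swap x (τ x) * τ'` with `τ'` fixing `x`. Passing from `τ'` to `τ` the left side never grows.
The right side can only decrease when `x` and `τ x` lie in different orbits of `⟨τ', σ⟩`; then it
decreases by two, while `c τ` and `c (τ * σ)` both drop by one. For a transitive pair there is a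
single orbit.
-/

open Equiv Equiv.Perm MulAction Subgroup

namespace Setoid

variable {β : Type*}

theorem card_quotient_le_of_le [Finite β] {r s : Setoid β} (h : r ≤ s) :
    Nat.card (Quotient s) ≤ Nat.card (Quotient r) :=
  Nat.card_le_card_of_surjective (map_of_le h) (Quotient.ind fun x => ⟨⟦x⟧, rfl⟩)

theorem card_quotient_lt_of_le [Finite β] {r s : Setoid β} (h : r ≤ s) {a b : β} (hs : s a b)
    (hr : ¬r a b) : Nat.card (Quotient s) < Nat.card (Quotient r) := by
  classical
  have := Fintype.ofFinite β
  simp only [Nat.card_eq_fintype_card]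
  exact Fintype.card_lt_of_surjective_not_injective (map_of_le h)
    (Quotient.ind fun x => ⟨⟦x⟧, rfl⟩) fun hinj => hr (Quotient.exact (hinj (Quotient.sound hs)))

open Classical in
/-- `r` with the classes of `a` and `b` glued together. -/
noncomputable def merge (r : Setoid β) (a b : β) : Setoid β :=
  ker (Function.update id (Quotient.mk r b) (Quotient.mk r a) ∘ Quotient.mk r)

theorem le_merge (r : Setoid β) (a b : β) : r ≤ r.merge a b :=
  fun _ _ h => ker_def.2 (by simp only [Function.comp_apply, Quotient.sound h])

theorem merge_rel (r : Setoid β) (a b : β) : r.merge a b a b := by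
  rw [merge, ker_def]
  simp [Function.update_apply]

theorem card_quotient_le_card_merge_add_one [Finite β] (r : Setoid β) (a b : β) :
    Nat.card (Quotient r) ≤ Nat.card (Quotient (r.merge a b)) + 1 := by
  classical
  rw [merge, Nat.card_congr (quotientKerEquivRange _), Nat.card_coe_set_eq]
  have hsub : {Quotient.mk r b}ᶜ ⊆ Set.range
      (Function.update id (Quotient.mk r b) (Quotient.mk r a) ∘ Quotient.mk r) := by
    rintro q (hq : q ≠ _)
    induction q using Quotient.inductionOn with
    | h x => exact ⟨x, Function.update_of_ne hq _ _⟩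
  have := Set.ncard_le_ncard hsub
  rw [Set.ncard_compl, Set.ncard_singleton] at this
  omega

def classStabilizer (s : Setoid β) : Subgroup (Perm β) where
  carrier := {g | ∀ x, s (g x) x}
  mul_mem' hg hh x := s.trans (hg _) (hh x)
  one_mem' x := s.refl x
  inv_mem' {g} hg x := by simpa using s.symm (hg (g⁻¹ x))

theorem swap_mul_mem_classStabilizer [DecidableEq β] {s : Setoid β} {a b : β} (h : s a b)
    {g : Perm β} (hg : g ∈ s.classStabilizer) : swap a b * g ∈ s.classStabilizer := by
  refine mul_mem (fun x => ?_) hg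
  rw [swap_apply_def]
  split_ifs with ha hb
  · exact ha ▸ s.symm h
  · exact hb ▸ h
  · exact s.refl x

end Setoid

theorem MulAction.orbitRel_le_iff_le_classStabilizer {β : Type*} {H : Subgroup (Perm β)}
    {s : Setoid β} : orbitRel H β ≤ s ↔ H ≤ s.classStabilizer :=
  ⟨fun h g hg x => h ⟨⟨g, hg⟩, rfl⟩, by rintro h x y ⟨⟨g, hg⟩, rfl⟩; exact h hg y⟩

namespace Equiv.Perm

variable {α : Type*}

theorem orbitRel_zpowers_iff_sameCycle {f : Perm α} {x y : α} :
    orbitRel (zpowers f) α x y ↔ SameCycle f x y := by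
  rw [orbitRel_apply, mem_orbit_iff]
  constructor
  · rintro ⟨⟨g, hg⟩, rfl⟩
    obtain ⟨k, rfl⟩ := mem_zpowers_iff.1 hg
    exact sameCycle_zpow_left.2 (SameCycle.refl f y)
  · rintro ⟨i, rfl⟩
    exact ⟨⟨(f ^ i)⁻¹, inv_mem (zpow_mem_zpowers f i)⟩, by simp [Perm.smul_def]⟩

/-- If neither holds, `swap a b * g` agrees with `g` along the whole `g`-cycle of `a`; this fails at
`g⁻¹ a`, which `swap a b * g` sends to `b`. -/
theorem sameCycle_or_sameCycle_swap_mul [DecidableEq α] [Finite α] (g : Perm α) (a b : α) :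
    SameCycle g a b ∨ SameCycle (swap a b * g) a b := by
  by_contra! ⟨hg, hf⟩
  have step : ∀ x, SameCycle g a x → SameCycle (swap a b * g) a x →
      SameCycle (swap a b * g) a (g x) ∧ g x ≠ a := by
    intro x hgx hfx
    have ha : g x ≠ a := fun h => hf (by simpa [h] using sameCycle_apply_right.2 hfx)
    have hb : g x ≠ b := fun h => hg (h ▸ sameCycle_apply_right.2 hgx)
    have hfg : (swap a b * g) x = g x := swap_apply_of_ne_of_ne ha hb
    exact ⟨hfg ▸ sameCycle_apply_right.2 hfx, ha⟩
  have hpow : ∀ k : ℕ, SameCycle (swap a b * g) a ((g ^ k) a) := by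
    intro k
    induction k with
    | zero => exact SameCycle.refl _ _
    | succ k ih =>
      rw [pow_succ', mul_apply]
      exact (step _ (sameCycle_pow_right.2 (SameCycle.refl g a)) ih).1
  have hinv : SameCycle g a (g⁻¹ a) := sameCycle_apply_right.1 (by simpa using SameCycle.refl g a)
  obtain ⟨k, -, hk⟩ := hinv.exists_pow_eq'
  exact (step _ (hk ▸ sameCycle_pow_right.2 (SameCycle.refl g a)) (hk ▸ hpow k)).2 (by simp)

noncomputable def numOrbits (H : Subgroup (Perm α)) : ℕ := Nat.card (orbitRel.Quotient H α)

theorem numOrbits_zpowers_one : numOrbits (zpowers (1 : Perm α)) = Nat.card α := by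
  have h : orbitRel (zpowers (1 : Perm α)) α = ⊥ := by
    ext x y
    rw [orbitRel_zpowers_iff_sameCycle, sameCycle_one]
    rfl
  rw [numOrbits, orbitRel.Quotient, h, Nat.card_congr Setoid.quotientBotEquiv]

theorem orbitRel_closure_insert_swap_mul_le [DecidableEq α] {g : Perm α} {S : Set (Perm α)}
    {s : Setoid α} (hs : orbitRel (closure (insert g S)) α ≤ s) {a b : α} (hab : s a b) :
    orbitRel (closure (insert (swap a b * g) S)) α ≤ s := by
  rw [orbitRel_le_iff_le_classStabilizer, closure_le, Set.insert_subset_iff] at hs ⊢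
  exact ⟨Setoid.swap_mul_mem_classStabilizer hab hs.1, hs.2⟩

section Finite

variable [DecidableEq α] [Finite α]

theorem numOrbits_closure_insert_le_swap_mul (g : Perm α) (S : Set (Perm α)) {a b : α}
    (h : orbitRel (closure (insert g S)) α a b) :
    numOrbits (closure (insert g S)) ≤ numOrbits (closure (insert (swap a b * g) S)) :=
  Setoid.card_quotient_le_of_le (orbitRel_closure_insert_swap_mul_le le_rfl h)

theorem numOrbits_closure_insert_le_swap_mul_add_one (g : Perm α) (S : Set (Perm α)) (a b : α) :
    numOrbits (closure (insert g S)) ≤ numOrbits (closure (insert (swap a b * g) S)) + 1 := by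
  set r := orbitRel (closure (insert g S)) α
  refine (r.card_quotient_le_card_merge_add_one a b).trans (Nat.add_le_add_right ?_ 1)
  exact Setoid.card_quotient_le_of_le
    (orbitRel_closure_insert_swap_mul_le (r.le_merge a b) (r.merge_rel a b))

theorem numOrbits_zpowers_swap_mul_le (g : Perm α) (a b : α) :
    numOrbits (zpowers (swap a b * g)) ≤ numOrbits (zpowers g) + 1 := by
  simpa [zpowers_eq_closure] using
    numOrbits_closure_insert_le_swap_mul_add_one (swap a b * g) ∅ a b

theorem numOrbits_zpowers_swap_mul_lt {g : Perm α} {a b : α} (h : ¬SameCycle g a b) :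
    numOrbits (zpowers (swap a b * g)) < numOrbits (zpowers g) := by
  have hab : orbitRel (zpowers (swap a b * g)) α a b :=
    orbitRel_zpowers_iff_sameCycle.2 ((sameCycle_or_sameCycle_swap_mul g a b).resolve_left h)
  have hle : orbitRel (zpowers g) α ≤ orbitRel (zpowers (swap a b * g)) α := by
    have hg := orbitRel_le_iff_le_classStabilizer.1
      (le_refl (orbitRel (zpowers (swap a b * g)) α))
    rw [zpowers_le] at hg
    rw [orbitRel_le_iff_le_classStabilizer, zpowers_le]
    simpa using Setoid.swap_mul_mem_classStabilizer hab hg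
  exact Setoid.card_quotient_lt_of_le hle hab (mt orbitRel_zpowers_iff_sameCycle.1 h)

theorem numOrbits_zpowers_swap_mul_of_apply_ne {f : Perm α} {x : α} (hx : f x ≠ x) :
    numOrbits (zpowers (swap x (f x) * f)) = numOrbits (zpowers f) + 1 := by
  have hfix : (swap x (f x) * f) x = x := by simp
  have hsplit : ¬SameCycle (swap x (f x) * f) x (f x) := fun h => hx (h.eq_of_left hfix).symm
  have hlt := numOrbits_zpowers_swap_mul_lt hsplit
  rw [swap_mul_self_mul] at hlt
  have hle := numOrbits_zpowers_swap_mul_le f x (f x)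
  omega

end Finite

section Fintype

variable [DecidableEq α] [Fintype α]

theorem sign_eq_neg_one_pow_numOrbits (f : Perm α) :
    sign f = (-1) ^ (Nat.card α + numOrbits (zpowers f)) := by
  by_cases hf : f = 1
  · subst hf
    rw [numOrbits_zpowers_one, ← two_mul, pow_mul]
    simp
  obtain ⟨x, hx⟩ : ∃ x, f x ≠ x := by simpa [Perm.ext_iff] using hf
  have ih := sign_eq_neg_one_pow_numOrbits (swap x (f x) * f)
  rw [numOrbits_zpowers_swap_mul_of_apply_ne hx, sign_mul, sign_swap hx.symm, ← add_assoc,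
    pow_succ] at ih
  simpa using ih
termination_by f.support.card
decreasing_by exact card_support_swap_mul hx

theorem even_card_add_numOrbits_zpowers (σ τ : Perm α) :
    Even (Nat.card α + numOrbits (zpowers σ) + numOrbits (zpowers τ) +
      numOrbits (zpowers (τ * σ))) := by
  have h := sign_mul τ σ
  rw [sign_eq_neg_one_pow_numOrbits, sign_eq_neg_one_pow_numOrbits,
    sign_eq_neg_one_pow_numOrbits, ← pow_add] at h
  have h2 := congrArg (· * (-1 : ℤˣ) ^ (Nat.card α + numOrbits (zpowers τ) +
    (Nat.card α + numOrbits (zpowers σ)))) h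
  simp only [← pow_add, ← sq, Int.units_sq,
    neg_one_pow_eq_one_iff_even (by decide : (-1 : ℤˣ) ≠ 1)] at h2
  rw [Nat.even_iff] at h2 ⊢
  omega

theorem numOrbits_zpowers_add_le (σ τ : Perm α) :
    numOrbits (zpowers σ) + numOrbits (zpowers τ) + numOrbits (zpowers (τ * σ)) ≤
      Nat.card α + 2 * numOrbits (closure {τ, σ}) := by
  by_cases hτ : τ = 1
  · subst hτ
    rw [closure_insert_one, ← zpowers_eq_closure, one_mul, numOrbits_zpowers_one]
    omega
  obtain ⟨x, hx⟩ : ∃ x, τ x ≠ x := by simpa [Perm.ext_iff] using hτ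
  have ih := numOrbits_zpowers_add_le σ (swap x (τ x) * τ)
  have hcyc := numOrbits_zpowers_swap_mul_of_apply_ne hx
  have hprod : swap x (τ x) * (swap x (τ x) * τ * σ) = τ * σ := by
    rw [← mul_assoc, swap_mul_self_mul]
  by_cases hr : orbitRel (closure {swap x (τ x) * τ, σ}) α x (τ x)
  · have hO := numOrbits_closure_insert_le_swap_mul _ _ hr
    have hc := numOrbits_zpowers_swap_mul_le (swap x (τ x) * τ * σ) x (τ x)
    rw [swap_mul_self_mul] at hO
    rw [hprod] at hc
    omega
  · have hle : orbitRel (zpowers (swap x (τ x) * τ * σ)) α ≤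
        orbitRel (closure {swap x (τ x) * τ, σ}) α :=
      orbitRel_le_iff_le_classStabilizer.2 <| (zpowers_le.2 <| mul_mem (subset_closure (by simp))
        (subset_closure (by simp))).trans (orbitRel_le_iff_le_classStabilizer.1 le_rfl)
    have hsc : ¬SameCycle (swap x (τ x) * τ * σ) x (τ x) :=
      fun h => hr (hle (orbitRel_zpowers_iff_sameCycle.2 h))
    have hO := numOrbits_closure_insert_le_swap_mul_add_one (swap x (τ x) * τ) {σ} x (τ x)
    have hc := numOrbits_zpowers_swap_mul_lt hsc
    rw [swap_mul_self_mul] at hO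
    rw [hprod] at hc
    omega
termination_by τ.support.card
decreasing_by exact card_support_swap_mul hx

end Fintype

end Equiv.Perm

theorem stmt9_general {e : ℕ} (σ τ : Equiv.Perm (Fin e))
    (htrans : ∀ k k' : Fin e,
      ∃ g ∈ Subgroup.closure ({σ, τ} : Set (Equiv.Perm (Fin e))), g k = k')
    (α β γ : ℕ)
    (hα : α = Nat.card (MulAction.orbitRel.Quotient (Subgroup.zpowers σ) (Fin e)))
    (hβ : β = Nat.card (MulAction.orbitRel.Quotient (Subgroup.zpowers τ) (Fin e)))
    (hγ : γ = Nat.card (MulAction.orbitRel.Quotient (Subgroup.zpowers (τ * σ)) (Fin e))) :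
    Even ((e : ℤ) - α - β - γ) ∧ α + β + γ ≤ e + 2 ∧
      ∃ g : ℕ, (g : ℤ) = 1 + ((e : ℤ) - α - β - γ) / 2 := by
  have htransitive : IsPretransitive (closure {τ, σ}) (Fin e) :=
    ⟨fun x y => by
      obtain ⟨g, hg, hgx⟩ := htrans x y
      exact ⟨⟨g, Set.pair_comm σ τ ▸ hg⟩, hgx⟩⟩
  have horbits : numOrbits (closure {τ, σ}) ≤ 1 :=
    Finite.card_le_one_iff_subsingleton.2
      ((pretransitive_iff_subsingleton_quotient _ _).1 htransitive)
  have hle := numOrbits_zpowers_add_le σ τ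
  have hpar := even_card_add_numOrbits_zpowers σ τ
  rw [Nat.card_eq_fintype_card, Fintype.card_fin] at hle hpar
  rw [show numOrbits (zpowers σ) = α from hα.symm, show numOrbits (zpowers τ) = β from hβ.symm,
    show numOrbits (zpowers (τ * σ)) = γ from hγ.symm] at hle hpar
  obtain ⟨k, hk⟩ := hpar
  exact ⟨⟨e - k, by omega⟩, by omega, ⟨(e + 2 - (α + β + γ)) / 2, by omega⟩⟩

theorem stmt9 {e : ℕ} (he : 1 ≤ e) (σ τ : Equiv.Perm (Fin e))
    (htrans : ∀ k k' : Fin e,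
      ∃ g ∈ Subgroup.closure ({σ, τ} : Set (Equiv.Perm (Fin e))), g k = k')
    (α β γ : ℕ)
    (hα : α = Nat.card (MulAction.orbitRel.Quotient (Subgroup.zpowers σ) (Fin e)))
    (hβ : β = Nat.card (MulAction.orbitRel.Quotient (Subgroup.zpowers τ) (Fin e)))
    (hγ : γ = Nat.card (MulAction.orbitRel.Quotient (Subgroup.zpowers (τ * σ)) (Fin e))) :
    Even ((e : ℤ) - α - β - γ) ∧ α + β + γ ≤ e + 2 ∧
      ∃ g : ℕ, (g : ℤ) = 1 + ((e : ℤ) - α - β - γ) / 2 :=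
  stmt9_general σ τ htrans α β γ hα hβ hγ
end

section
/- Let τ = (1 4)(2 5)(3 6)(7 10)(8 11)(9 12), σ₁ = (1 2 3)(4 7 12)(5 8 10)(6 9 11), σ₂ = (1 2 3)(4 7 12)(5 8 10)(6 11 9) and σ₃ = (1 2 3)(4 12 7)(5 10 8)(6 11 9) be permutations of {1, …, 12}. Then the three pairs (σ₁, τ), (σ₂, τ), (σ₃, τ) are pairwise non-simultaneously-conjugate: for i ≠ j there is no permutation η of Fin 12 with η σᵢ η⁻¹ = σⱼ and η τ η⁻¹ = τ. (Hence there are at least three non-isomorphic dessins d'enfants whose underlying bipartite graph is the clean bipartite graph A₄ of the tetrahedron; in fact these three exhaust all of them up to isomorphism.) -/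
/-!
Simultaneous conjugation of a monodromy pair `(σ, τ)` conjugates its face permutation `σ * τ`,
so the cycle type of `σ * τ` (the face degrees of the dessin) is an isomorphism invariant,
and it differs for the three pairs.
-/

open Equiv

theorem Equiv.Perm.cycleType_mul_eq_of_conj {α : Type*} [Fintype α] [DecidableEq α]
    {σ τ σ' τ' η : Perm α} (hσ : η * σ * η⁻¹ = σ') (hτ : η * τ * η⁻¹ = τ') :
    (σ' * τ').cycleType = (σ * τ).cycleType := by
  rw [← hσ, ← hτ, ← Perm.cycleType_conj (τ := η) (σ := σ * τ)]
  congr 1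
  group

set_option maxRecDepth 10000 in
theorem stmt15 :
    let τ : Equiv.Perm (Fin 12) := c[0, 3] * c[1, 4] * c[2, 5] * c[6, 9] * c[7, 10] * c[8, 11]
    let σs : Fin 3 → Equiv.Perm (Fin 12) :=
      ![c[0, 1, 2] * c[3, 6, 11] * c[4, 7, 9] * c[5, 8, 10],
        c[0, 1, 2] * c[3, 6, 11] * c[4, 7, 9] * c[5, 10, 8],
        c[0, 1, 2] * c[3, 11, 6] * c[4, 9, 7] * c[5, 10, 8]]
    ∀ i j : Fin 3, i ≠ j →
      ¬ ∃ η : Equiv.Perm (Fin 12), η * σs i * η⁻¹ = σs j ∧ η * τ * η⁻¹ = τ := by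
  intro τ σs i j hij ⟨η, hσ, hτ⟩
  have hfaces : ∀ k, (σs k * τ).cycleType = ![{9, 3}, {8, 4}, {3, 3, 3, 3}] k := by decide
  have hinj : Function.Injective (![{9, 3}, {8, 4}, {3, 3, 3, 3}] : Fin 3 → Multiset ℕ) := by
    decide
  refine hij (hinj ?_)
  rw [← hfaces, ← hfaces, Perm.cycleType_mul_eq_of_conj hσ hτ]
end

section
/- In the symmetric group of permutations of the 18-element set {1, …, 18}, the subgroup generated by σ₁ = (1 2 3)(4 5 6)(7 8 9)(10 11 12)(13 14 15)(16 17 18) and τ = (1 12)(2 15)(3 18)(4 11)(5 14)(6 17)(9 16)(7 10)(8 13) is isomorphic to the direct product (ZMod 3) × S₃ of a cyclic group of order 3 and the symmetric group on 3 letters (so it has order 18), and it acts transitively on Fin 18 (hence the corresponding genus-one dessin d'enfant, whose underlying bipartite graph is the clean bipartite graph of K₍₃,₃₎ and which lives on the Fermat cubic x³ + y³ + z³ = 0, is regular). -/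
/-!
The group `C₃ × S₃` acts regularly on itself by left multiplication. Labelling the 18 edges by
its elements so that `σ₁` and `τ` become left multiplication by `(1, (0 1 2))` and `(0, (0 1))`
turns this regular action into a faithful representation whose image is generated by `σ₁` and
`τ`, because those two elements generate `C₃ × S₃`; the image of a regular action is
transitive.
-/

open Equiv

section LeftRegularRepresentation

variable {G α : Type*} [Group G] (e : α ≃ G)

def leftRegularRepOn : G →* Perm α :=
  e.symm.permCongrHom.toMonoidHom.comp (MulAction.toPermHom G G)

variable {e}

theorem apply_leftRegularRepOn (g : G) (x : α) : e (leftRegularRepOn e g x) = g * e x := by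
  simp [leftRegularRepOn, Equiv.permCongr_apply]

theorem leftRegularRepOn_eq_iff {g : G} {p : Perm α} :
    leftRegularRepOn e g = p ↔ ∀ x, e (p x) = g * e x := by
  simp only [Equiv.ext_iff, ← apply_leftRegularRepOn, e.apply_eq_iff_eq, eq_comm]

theorem leftRegularRepOn_injective : Function.Injective (leftRegularRepOn e) := fun g h hgh => by
  simpa [apply_leftRegularRepOn] using congrArg e (DFunLike.congr_fun hgh (e.symm 1))

theorem exists_leftRegularRepOn_apply_eq (x y : α) : ∃ g, leftRegularRepOn e g x = y :=
  ⟨e y * (e x)⁻¹, e.injective (by rw [apply_leftRegularRepOn, inv_mul_cancel_right])⟩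

end LeftRegularRepresentation

abbrev C3S3 := Multiplicative (ZMod 3) × Perm (Fin 3)

def sigmaGen : C3S3 := (.ofAdd 1, c[0, 1, 2])

def tauGen : C3S3 := (1, swap 0 1)

-- `sigmaGen * tauGen * sigmaGen * tauGen = (2, 1)` generates the factor `C₃`.
set_option maxRecDepth 10000 in
theorem exists_eq_pow_mul_pow_mul_pow (g : C3S3) :
    ∃ i j : Fin 3, ∃ l : Fin 2,
      g = (sigmaGen * tauGen * sigmaGen * tauGen) ^ (i : ℕ) * sigmaGen ^ (j : ℕ) *
        tauGen ^ (l : ℕ) := by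
  revert g
  decide

theorem closure_sigmaGen_tauGen : Subgroup.closure {sigmaGen, tauGen} = ⊤ := by
  refine eq_top_iff.mpr fun g _ => ?_
  have hσ : sigmaGen ∈ Subgroup.closure {sigmaGen, tauGen} :=
    Subgroup.subset_closure (Set.mem_insert _ _)
  have hτ : tauGen ∈ Subgroup.closure {sigmaGen, tauGen} :=
    Subgroup.subset_closure (Set.mem_insert_of_mem _ rfl)
  obtain ⟨i, j, l, rfl⟩ := exists_eq_pow_mul_pow_mul_pow g
  exact mul_mem (mul_mem (pow_mem (mul_mem (mul_mem (mul_mem hσ hτ) hσ) hτ) _) (pow_mem hσ _))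
    (pow_mem hτ _)

/-- `edgeLabel k` is the element of `C3S3` carrying edge `0` to edge `k`, when `σ₁` acts as
`sigmaGen` and `τ` as `tauGen`. -/
def edgeLabel : Fin 18 → C3S3 :=
  ![(.ofAdd 0, 1), (.ofAdd 1, c[0, 1, 2]), (.ofAdd 2, c[0, 2, 1]),
    (.ofAdd 2, c[0, 1, 2]), (.ofAdd 0, c[0, 2, 1]), (.ofAdd 1, 1),
    (.ofAdd 1, c[0, 2, 1]), (.ofAdd 2, 1), (.ofAdd 0, c[0, 1, 2]),
    (.ofAdd 1, swap 0 2), (.ofAdd 2, swap 1 2), (.ofAdd 0, swap 0 1),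
    (.ofAdd 2, swap 0 1), (.ofAdd 0, swap 0 2), (.ofAdd 1, swap 1 2),
    (.ofAdd 0, swap 1 2), (.ofAdd 1, swap 0 1), (.ofAdd 2, swap 0 2)]

theorem edgeLabel_bijective : Function.Bijective edgeLabel := by decide

noncomputable def edgeEquiv : Fin 18 ≃ C3S3 := .ofBijective edgeLabel edgeLabel_bijective

theorem leftRegularRepOn_sigmaGen :
    leftRegularRepOn edgeEquiv sigmaGen =
      c[0, 1, 2] * c[3, 4, 5] * c[6, 7, 8] * c[9, 10, 11] * c[12, 13, 14] * c[15, 16, 17] :=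
  leftRegularRepOn_eq_iff.mpr (by decide)

theorem leftRegularRepOn_tauGen :
    leftRegularRepOn edgeEquiv tauGen =
      c[0, 11] * c[1, 14] * c[2, 17] * c[3, 10] * c[4, 13] * c[5, 16] * c[8, 15] * c[6, 9] *
        c[7, 12] :=
  leftRegularRepOn_eq_iff.mpr (by decide)

theorem stmt18 :
    let σ₁ : Equiv.Perm (Fin 18) :=
      c[0, 1, 2] * c[3, 4, 5] * c[6, 7, 8] * c[9, 10, 11] * c[12, 13, 14] * c[15, 16, 17]
    let τ : Equiv.Perm (Fin 18) :=
      c[0, 11] * c[1, 14] * c[2, 17] * c[3, 10] * c[4, 13] * c[5, 16] * c[8, 15] * c[6, 9] *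
        c[7, 12]
    let H := Subgroup.closure ({σ₁, τ} : Set (Equiv.Perm (Fin 18)))
    Nonempty (H ≃* Multiplicative (ZMod 3) × Equiv.Perm (Fin 3)) ∧ Nat.card H = 18 ∧
      ∀ k k' : Fin 18, ∃ g ∈ H, g k = k' := by
  intro σ₁ τ H
  have hH : H = (leftRegularRepOn edgeEquiv).range := by
    rw [MonoidHom.range_eq_map, ← closure_sigmaGen_tauGen, MonoidHom.map_closure,
      Set.image_pair, leftRegularRepOn_sigmaGen, leftRegularRepOn_tauGen]
  let iso : C3S3 ≃* H :=
    (MonoidHom.ofInjective leftRegularRepOn_injective).trans (MulEquiv.subgroupCongr hH.symm)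
  refine ⟨⟨iso.symm⟩, ?_, fun k k' => ?_⟩
  · rw [← Nat.card_congr iso.toEquiv]
    simp [Nat.card_eq_fintype_card, Fintype.card_perm, Nat.factorial]
  · obtain ⟨g, hg⟩ := exists_leftRegularRepOn_apply_eq (e := edgeEquiv) k k'
    exact ⟨_, hH ▸ ⟨g, rfl⟩, hg⟩
end
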